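/- Let n ≥ 1 be a natural number, δ > 0, and let a, b, c, r, d₁, d₂, d₃ : (-δ, 0) → ℝ be bounded functions. Define f(t) = t/(1 - t·r(t)), h(t) = a(t) + 4/t² - 6·r(t)/t + 4·r(t)², and Nh(t) = b(t) + 4·c(t) - 16/t³ + 12·r(t)/t² - 6·a(t)/t. Then, as t → 0⁻, the expression (f(t)²·t/(2(n+1)))·( 2·d₁(t) + d₂(t) + f(t)·d₃(t) + 2·h(t)·r(t) + Nh(t) + f(t)·h(t)·a(t) + 2·f(t)·h(t)/t² ) converges to -4/(n+1). -/
import Mathlib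


open Filter Topology

set_option maxHeartbeats 1000000

/-- Klembeck's boundary limit for the sectional curvature of the plane spanned by `{N, T}`:
with `f(t) = t/(1 - t r(t))`, `h(t) = a(t) + 4/t² - 6 r(t)/t + 4 r(t)²` and
`Nh(t) = b(t) + 4 c(t) - 16/t³ + 12 r(t)/t² - 6 a(t)/t`, the expression
`(f² t/(2(n+1))) (2 d₁ + d₂ + f d₃ + 2 h r + Nh + f h a + 2 f h/t²)` tends to `-4/(n+1)`
as `t → 0⁻`, provided `a, b, c, r, d₁, d₂, d₃` are bounded. -/
theorem klembeck_limit_normal_plane (n : ℕ) (hn : 1 ≤ n) (δ : ℝ) (hδ : 0 < δ)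
    (a b c r d₁ d₂ d₃ : ℝ → ℝ)
    (ha : ∃ C : ℝ, ∀ t ∈ Set.Ioo (-δ) (0 : ℝ), |a t| ≤ C)
    (hb : ∃ C : ℝ, ∀ t ∈ Set.Ioo (-δ) (0 : ℝ), |b t| ≤ C)
    (hc : ∃ C : ℝ, ∀ t ∈ Set.Ioo (-δ) (0 : ℝ), |c t| ≤ C)
    (hr : ∃ C : ℝ, ∀ t ∈ Set.Ioo (-δ) (0 : ℝ), |r t| ≤ C)
    (hd₁ : ∃ C : ℝ, ∀ t ∈ Set.Ioo (-δ) (0 : ℝ), |d₁ t| ≤ C)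
    (hd₂ : ∃ C : ℝ, ∀ t ∈ Set.Ioo (-δ) (0 : ℝ), |d₂ t| ≤ C)
    (hd₃ : ∃ C : ℝ, ∀ t ∈ Set.Ioo (-δ) (0 : ℝ), |d₃ t| ≤ C)
    (f : ℝ → ℝ) (hf : ∀ t, f t = t / (1 - t * r t))
    (h : ℝ → ℝ) (hh : ∀ t, h t = a t + 4 / t ^ 2 - 6 * r t / t + 4 * r t ^ 2)
    (Nh : ℝ → ℝ)
    (hNh : ∀ t, Nh t = b t + 4 * c t - 16 / t ^ 3 + 12 * r t / t ^ 2 - 6 * a t / t) :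
    Tendsto (fun t => (f t ^ 2 * t / (2 * ((n : ℝ) + 1))) *
        (2 * d₁ t + d₂ t + f t * d₃ t + 2 * h t * r t + Nh t + f t * h t * a t
          + 2 * f t * h t / t ^ 2))
      (𝓝[Set.Ioo (-δ) 0] 0) (𝓝 (-4 / ((n : ℝ) + 1))) := by
  set l := 𝓝[Set.Ioo (-δ) (0:ℝ)] (0:ℝ) with hl
  have ht0 : Tendsto (fun t : ℝ => t) l (𝓝 0) :=
    tendsto_id.mono_left nhdsWithin_le_nhds
  have key : ∀ g : ℝ → ℝ, (∃ C : ℝ, ∀ t ∈ Set.Ioo (-δ) (0 : ℝ), |g t| ≤ C) →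
      Tendsto (fun t => t * g t) l (𝓝 0) := by
    rintro g ⟨C, hC⟩
    refine ht0.zero_mul_isBoundedUnder_le ⟨C, eventually_map.2 ?_⟩
    filter_upwards [self_mem_nhdsWithin] with t ht
    simpa using hC t ht
  have hta := key a ha
  have htb := key b hb
  have htc := key c hc
  have htr := key r hr
  have htd₁ := key d₁ hd₁
  have htd₂ := key d₂ hd₂
  have htd₃ := key d₃ hd₃
  -- F tends to 1
  have hF : Tendsto (fun t : ℝ => (1 - t * r t)⁻¹) l (𝓝 1) := by
    have : Tendsto (fun t : ℝ => 1 - t * r t) l (𝓝 1) := by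
      simpa using tendsto_const_nhds.sub htr
    simpa using this.inv₀ one_ne_zero
  have hH : Tendsto (fun t : ℝ => (t * a t) * t + 4 - 6 * (t * r t) + 4 * (t * r t) ^ 2)
      l (𝓝 4) := by
    have := (((hta.mul ht0).add_const 4).sub (htr.const_mul 6)).add ((htr.pow 2).const_mul 4)
    simpa using this
  have hNH3 : Tendsto (fun t : ℝ => (t * b t) * t ^ 2 + 4 * (t * c t) * t ^ 2 - 16
      + 12 * (t * r t) - 6 * ((t * a t) * t)) l (𝓝 (-16)) := by
    have := ((((htb.mul (ht0.pow 2)).add (((htc.const_mul 4).mul (ht0.pow 2)))).sub_const 16).add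
      (htr.const_mul 12)).sub ((hta.mul ht0).const_mul 6)
    simpa using this
  -- the bracket
  have hBr : Tendsto (fun t : ℝ =>
      2 * (t * d₁ t) * t ^ 2 + (t * d₂ t) * t ^ 2
      + (1 - t * r t)⁻¹ * (t * d₃ t) * t ^ 3
      + 2 * ((t * a t) * t + 4 - 6 * (t * r t) + 4 * (t * r t) ^ 2) * (t * r t)
      + ((t * b t) * t ^ 2 + 4 * (t * c t) * t ^ 2 - 16 + 12 * (t * r t) - 6 * ((t * a t) * t))
      + (1 - t * r t)⁻¹ * ((t * a t) * t + 4 - 6 * (t * r t) + 4 * (t * r t) ^ 2) * ((t * a t) * t)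
      + 2 * (1 - t * r t)⁻¹ * ((t * a t) * t + 4 - 6 * (t * r t) + 4 * (t * r t) ^ 2))
      l (𝓝 (-8)) := by
    have := (((((((htd₁.const_mul 2).mul (ht0.pow 2)).add ((htd₂).mul (ht0.pow 2))).add
      ((hF.mul htd₃).mul (ht0.pow 3))).add ((hH.const_mul 2).mul htr)).add hNH3).add
      ((hF.mul hH).mul (hta.mul ht0))).add ((hF.const_mul 2).mul hH)
    norm_num at this
    convert this using 2
  have hG : Tendsto (fun t : ℝ => ((1 - t * r t)⁻¹) ^ 2 / (2 * ((n : ℝ) + 1)) *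
      (2 * (t * d₁ t) * t ^ 2 + (t * d₂ t) * t ^ 2
      + (1 - t * r t)⁻¹ * (t * d₃ t) * t ^ 3
      + 2 * ((t * a t) * t + 4 - 6 * (t * r t) + 4 * (t * r t) ^ 2) * (t * r t)
      + ((t * b t) * t ^ 2 + 4 * (t * c t) * t ^ 2 - 16 + 12 * (t * r t) - 6 * ((t * a t) * t))
      + (1 - t * r t)⁻¹ * ((t * a t) * t + 4 - 6 * (t * r t) + 4 * (t * r t) ^ 2) * ((t * a t) * t)
      + 2 * (1 - t * r t)⁻¹ * ((t * a t) * t + 4 - 6 * (t * r t) + 4 * (t * r t) ^ 2)))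
      l (𝓝 (-4 / ((n : ℝ) + 1))) := by
    have hn1 : (2 : ℝ) * ((n : ℝ) + 1) ≠ 0 := by positivity
    have := ((hF.pow 2).div_const (2 * ((n : ℝ) + 1))).mul hBr
    convert this using 2
    field_simp
    ring
  refine hG.congr' ?_
  filter_upwards [self_mem_nhdsWithin] with t ht
  have ht0' : t ≠ 0 := ne_of_lt ht.2
  rw [hf, hh, hNh]
  simp only [div_eq_mul_inv]
  set F := (1 - t * r t)⁻¹
  field_simp
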